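/- arXiv:1102.2940 — 6 statements merged into one kernel-verified Lean document; each statement's English description precedes it below -/
import Mathlib

section
/- Let d ≥ 2 and let x ∈ ℝ^d be strictly positive and non-increasing. Let y ∈ ℝ^d be defined by y_d = x_d and y_j = x_d · frac((x_j − x_{j+1})/x_d) for j < d, and let a ∈ ℤ^d be defined by a_d = 1 and a_j = 1 + Σ_{k=j}^{d−1} ⌊(x_k − x_{k+1})/x_d⌋ for j < d. Then the additive subgroup of ℝ generated by the coordinates of x equals the additive subgroup of ℝ generated by the coordinates of y. -/
theorem stmt_1 (d : ℕ) (hd : 2 ≤ d) (x : Fin d → ℝ)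
    (hpos : ∀ i, 0 < x i) (hmono : ∀ i j : Fin d, i ≤ j → x j ≤ x i) :
    AddSubgroup.closure (Set.range x) =
      AddSubgroup.closure (Set.range (fun j : Fin d =>
        if hj : (j : ℕ) + 1 < d then
          x ⟨d - 1, by omega⟩ *
            Int.fract ((x j - x ⟨(j : ℕ) + 1, hj⟩) / x ⟨d - 1, by omega⟩)
        else x ⟨d - 1, by omega⟩)) := by
  have hd1 : d - 1 < d := by omega
  set c : ℝ := x ⟨d - 1, hd1⟩ with hcdef
  have hc0 : c ≠ 0 := ne_of_gt (hpos _)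
  set y : Fin d → ℝ := fun j : Fin d =>
    if hj : (j : ℕ) + 1 < d then
      c * Int.fract ((x j - x ⟨(j : ℕ) + 1, hj⟩) / c)
    else c with hydef
  have hkey : ∀ j : Fin d, ∀ hj : (j : ℕ) + 1 < d,
      x j = y j + (⌊(x j - x ⟨(j : ℕ) + 1, hj⟩) / c⌋ : ℝ) * c + x ⟨(j : ℕ) + 1, hj⟩ := by
    intro j hj
    have hyj : y j = c * Int.fract ((x j - x ⟨(j : ℕ) + 1, hj⟩) / c) := by
      simp [hydef, hj]
    rw [hyj, Int.fract]
    field_simp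
    ring
  have hylast : y ⟨d - 1, hd1⟩ = c := by
    have : ¬ ((d - 1) + 1 < d) := by omega
    simp [hydef, this]
  apply le_antisymm
  · rw [AddSubgroup.closure_le]
    rintro _ ⟨j, rfl⟩
    set S := AddSubgroup.closure (Set.range y) with hS
    have hcS : c ∈ S := by
      rw [← hylast]; exact AddSubgroup.subset_closure (Set.mem_range_self _)
    have main : ∀ k : ℕ, ∀ j : Fin d, d - 1 - (j : ℕ) ≤ k → x j ∈ S := by
      intro k
      induction k with
      | zero =>
        intro j hjk
        have hjeq : (j : ℕ) = d - 1 := by omega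
        have : j = ⟨d - 1, hd1⟩ := Fin.ext hjeq
        rw [this]
        exact hcS
      | succ k ih =>
        intro j hjk
        by_cases h : d - 1 - (j : ℕ) ≤ k
        · exact ih j h
        · have hj : (j : ℕ) + 1 < d := by omega
          rw [hkey j hj]
          refine add_mem (add_mem (AddSubgroup.subset_closure (Set.mem_range_self _)) ?_)
            (ih ⟨(j : ℕ) + 1, hj⟩ (by simp; omega))
          have := AddSubgroup.zsmul_mem S hcS (⌊(x j - x ⟨(j : ℕ) + 1, hj⟩) / c⌋)
          rwa [zsmul_eq_mul] at this
    exact main d j (by omega)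
  · rw [AddSubgroup.closure_le]
    rintro _ ⟨j, rfl⟩
    set T := AddSubgroup.closure (Set.range x) with hT
    have hxT : ∀ i : Fin d, x i ∈ T := fun i =>
      AddSubgroup.subset_closure (Set.mem_range_self _)
    by_cases hj : (j : ℕ) + 1 < d
    · have hyj : y j = x j - (⌊(x j - x ⟨(j : ℕ) + 1, hj⟩) / c⌋ : ℝ) * c
          - x ⟨(j : ℕ) + 1, hj⟩ := by
        have := hkey j hj
        linarith
      rw [hyj]
      refine sub_mem (sub_mem (hxT j) ?_) (hxT _)
      have := AddSubgroup.zsmul_mem T (hxT ⟨d - 1, hd1⟩) (⌊(x j - x ⟨(j : ℕ) + 1, hj⟩) / c⌋)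
      rwa [zsmul_eq_mul] at this
    · have : y j = c := by simp [hydef, hj]
      rw [this]
      exact hxT _
end

section
/- Let d ≥ 2 and let A and A' be d × d admissible matrices. Then the product A·A' is a strictly positive matrix, and its Hilbert-metric diameter satisfies D(A·A') ≤ 2·ln(d), where D(M) := sup{ Θ(M·v, M·w) : v, w ∈ (ℝ_{≥0})^d \ {0} } and Θ is the Hilbert projective metric on (ℝ_{>0})^d. -/
/-- The Hilbert projective (pseudo)metric on strictly positive vectors. -/
noncomputable def hilbertTheta {m : Type*} [Fintype m] (x x' : m → ℝ) : ℝ :=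
  Real.log (sInf {μ : ℝ | 0 < μ ∧ ∀ i, x' i ≤ μ * x i} /
    sSup {l : ℝ | 0 < l ∧ ∀ i, l * x i ≤ x' i})

/-- The Hilbert-metric diameter of the image of the nonzero nonnegative cone. -/
noncomputable def hilbertDiam {m n : Type*} [Fintype m] [Fintype n]
    (A : Matrix m n ℝ) : ℝ :=
  sSup {t : ℝ | ∃ y y' : n → ℝ, (∀ j, 0 ≤ y j) ∧ y ≠ 0 ∧ (∀ j, 0 ≤ y' j) ∧ y' ≠ 0 ∧
    t = hilbertTheta (A.mulVec y) (A.mulVec y')}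

/-- An admissible `d × d` integer matrix: its first column is a positive non-increasing
vector `a` with last entry `1` and for `j ≥ 2` its `j`-th column is `e₁ + ⋯ + e_{σ(j)}`
for an injective `σ` with `σ(1) = d`. -/
def IsAdmissible {d : ℕ} (A : Matrix (Fin d) (Fin d) ℤ) : Prop :=
  ∃ (a : Fin d → ℤ) (σ : Fin d → Fin d),
    (∀ i, 0 < a i) ∧ (∀ i j : Fin d, i ≤ j → a j ≤ a i) ∧
    (∀ i : Fin d, (i : ℕ) = d - 1 → a i = 1) ∧
    Function.Injective σ ∧ (∀ j : Fin d, (j : ℕ) = 0 → ((σ j : ℕ) = d - 1)) ∧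
    (∀ i j : Fin d, (j : ℕ) = 0 → A i j = a i) ∧
    (∀ i j : Fin d, (j : ℕ) ≠ 0 → A i j = if i ≤ σ j then 1 else 0)

/-!
Column `0` of an admissible matrix dominates its other columns and row `0` dominates its other
rows, so `A i 0 * A' 0 k` is the largest of the `d` nonnegative terms of `(A * A') i k`. Hence
`A * A'` lies between the rank-one matrix `u i * v k` (with `u i = A i 0`, `v k = A' 0 k`) and `d`
times it, so its cross ratios `M i k * M j l / (M i l * M j k)` are at most `d ^ 2`. By bilinearity
the same bound holds for `x' i * x j / (x i * x' j)` whenever `x, x'` are images of nonnegative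
vectors, and this ratio, maximised over `i, j`, is exactly the quotient inside the logarithm of
the Hilbert metric.
-/

section HilbertMetric

variable {m n : Type*}

theorem hilbertTheta_le_log_of_cross [Fintype m] [Nonempty m] {x x' : m → ℝ} {κ : ℝ}
    (hx : ∀ i, 0 < x i) (hx' : ∀ i, 0 < x' i)
    (hcross : ∀ i j, x' i * x j ≤ κ * (x i * x' j)) :
    hilbertTheta x x' ≤ Real.log κ := by
  obtain ⟨j, hj⟩ := Finite.exists_min fun i => x' i / x i
  set lam := x' j / x j
  have hlam : 0 < lam := div_pos (hx' j) (hx j)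
  have hlam_le : ∀ i, lam * x i ≤ x' i := fun i => by
    have := hj i
    rwa [le_div_iff₀ (hx i)] at this
  have hsSup : sSup {l : ℝ | 0 < l ∧ ∀ i, l * x i ≤ x' i} = lam := by
    refine IsGreatest.csSup_eq ⟨⟨hlam, hlam_le⟩, fun l hl => ?_⟩
    rw [le_div_iff₀ (hx j)]
    exact hl.2 j
  set U := {μ : ℝ | 0 < μ ∧ ∀ i, x' i ≤ μ * x i}
  have hκU : κ * lam ∈ U := by
    refine ⟨?_, fun i => ?_⟩
    · have hκ : 0 < κ := by nlinarith [hcross j j, mul_pos (hx j) (hx' j)]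
      positivity
    · show x' i ≤ κ * (x' j / x j) * x i
      rw [mul_right_comm, mul_div_assoc', le_div_iff₀ (hx j)]
      simpa only [mul_assoc] using hcross i j
  have hlam_le_sInf : lam ≤ sInf U :=
    le_csInf ⟨_, hκU⟩ fun μ hμ => by
      rw [div_le_iff₀ (hx j)]
      exact hμ.2 j
  have hsInf_le : sInf U ≤ κ * lam := csInf_le ⟨0, fun μ hμ => hμ.1.le⟩ hκU
  rw [hilbertTheta, hsSup]
  gcongr
  · exact div_pos (hlam.trans_le hlam_le_sInf) hlam
  · rwa [div_le_iff₀ hlam]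

theorem mulVec_pos [Fintype n] {M : Matrix m n ℝ} (hM : ∀ i k, 0 < M i k) {y : n → ℝ}
    (hy : ∀ k, 0 ≤ y k) (hy0 : y ≠ 0) (i : m) : 0 < M.mulVec y i := by
  obtain ⟨k, hk⟩ := Function.ne_iff.mp hy0
  exact Finset.sum_pos' (fun l _ => mul_nonneg (hM i l).le (hy l))
    ⟨k, Finset.mem_univ k, mul_pos (hM i k) ((hy k).lt_of_ne' hk)⟩

theorem mulVec_cross_le [Fintype n] {M : Matrix m n ℝ} {κ : ℝ}
    (hcross : ∀ i j k l, M i k * M j l ≤ κ * (M i l * M j k)) {y y' : n → ℝ}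
    (hy : ∀ k, 0 ≤ y k) (hy' : ∀ k, 0 ≤ y' k) (i j : m) :
    M.mulVec y' i * M.mulVec y j ≤ κ * (M.mulVec y i * M.mulVec y' j) := by
  simp only [Matrix.mulVec, dotProduct]
  rw [Finset.sum_mul_sum, Finset.sum_mul_sum,
    Finset.sum_comm (f := fun l k => M i l * y l * (M j k * y' k))]
  simp only [Finset.mul_sum]
  refine Finset.sum_le_sum fun k _ => Finset.sum_le_sum fun l _ => ?_
  calc M i k * y' k * (M j l * y l) = M i k * M j l * (y' k * y l) := by ring
    _ ≤ κ * (M i l * M j k) * (y' k * y l) :=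
        mul_le_mul_of_nonneg_right (hcross i j k l) (mul_nonneg (hy' k) (hy l))
    _ = κ * (M i l * y l * (M j k * y' k)) := by ring

theorem hilbertDiam_le_log_of_cross [Fintype m] [Fintype n] [Nonempty m] {M : Matrix m n ℝ}
    {κ : ℝ} (hκ : 1 ≤ κ) (hM : ∀ i k, 0 < M i k)
    (hcross : ∀ i j k l, M i k * M j l ≤ κ * (M i l * M j k)) :
    hilbertDiam M ≤ Real.log κ := by
  refine Real.sSup_le ?_ (Real.log_nonneg hκ)
  rintro t ⟨y, y', hy, hy0, hy', hy'0, rfl⟩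
  exact hilbertTheta_le_log_of_cross (mulVec_pos hM hy hy0) (mulVec_pos hM hy' hy'0)
    (mulVec_cross_le hcross hy hy')

theorem cross_le_of_rankOne_sandwich {M : Matrix m n ℝ} {u : m → ℝ} {v : n → ℝ} {C : ℝ}
    (hu : ∀ i, 0 ≤ u i) (hv : ∀ k, 0 ≤ v k)
    (hlow : ∀ i k, u i * v k ≤ M i k) (hupp : ∀ i k, M i k ≤ C * (u i * v k))
    (i j : m) (k l : n) : M i k * M j l ≤ C ^ 2 * (M i l * M j k) := by
  have hM : ∀ i k, 0 ≤ M i k := fun i k => (mul_nonneg (hu i) (hv k)).trans (hlow i k)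
  calc M i k * M j l ≤ C * (u i * v k) * (C * (u j * v l)) :=
        mul_le_mul (hupp i k) (hupp j l) (hM j l) ((hM i k).trans (hupp i k))
    _ = C ^ 2 * (u i * v l * (u j * v k)) := by ring
    _ ≤ C ^ 2 * (M i l * M j k) :=
        mul_le_mul_of_nonneg_left
          (mul_le_mul (hlow i l) (hlow j k) (mul_nonneg (hu j) (hv k)) (hM i l)) (sq_nonneg C)

end HilbertMetric

section MatrixProduct

variable {R m n o : Type*} [Semiring R] [PartialOrder R] [IsOrderedRing R] [Fintype n]
  {A : Matrix m n R} {B : Matrix n o R} {i : m} {k : o}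

theorem Matrix.mul_apply_le_card_nsmul (hA : ∀ l, 0 ≤ A i l) (hB : ∀ l, 0 ≤ B l k) {p : n}
    (hAp : ∀ l, A i l ≤ A i p) (hBp : ∀ l, B l k ≤ B p k) :
    (A * B) i k ≤ Fintype.card n • (A i p * B p k) :=
  Finset.sum_le_card_nsmul _ _ _ fun l _ =>
    mul_le_mul (hAp l) (hBp l) (hB l) ((hA l).trans (hAp l))

theorem Matrix.apply_mul_apply_le_mul_apply (hA : ∀ l, 0 ≤ A i l) (hB : ∀ l, 0 ≤ B l k)
    (p : n) :
    A i p * B p k ≤ (A * B) i k :=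
  Finset.single_le_sum (fun l _ => mul_nonneg (hA l) (hB l)) (Finset.mem_univ p)

end MatrixProduct

namespace IsAdmissible

variable {d : ℕ} {A : Matrix (Fin d) (Fin d) ℤ}

theorem nonneg (hA : IsAdmissible A) (i l : Fin d) : 0 ≤ A i l := by
  obtain ⟨a, σ, ha, -, -, -, -, hcol0, hcol⟩ := hA
  by_cases hl : (l : ℕ) = 0
  · rw [hcol0 i l hl]; exact (ha i).le
  · rw [hcol i l hl]; split_ifs <;> norm_num

theorem apply_zero_pos [NeZero d] (hA : IsAdmissible A) (i : Fin d) : 0 < A i 0 := by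
  obtain ⟨a, σ, ha, -, -, -, -, hcol0, -⟩ := hA
  rw [hcol0 i 0 rfl]; exact ha i

theorem zero_apply_pos [NeZero d] (hA : IsAdmissible A) (k : Fin d) : 0 < A 0 k := by
  obtain ⟨a, σ, ha, -, -, -, -, hcol0, hcol⟩ := hA
  by_cases hk : (k : ℕ) = 0
  · rw [hcol0 0 k hk]; exact ha 0
  · rw [hcol 0 k hk, if_pos (Fin.zero_le _)]; exact one_pos

theorem apply_le_apply_zero [NeZero d] (hA : IsAdmissible A) (i l : Fin d) : A i l ≤ A i 0 := by
  obtain ⟨a, σ, ha, -, -, -, -, hcol0, hcol⟩ := hA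
  rw [hcol0 i 0 rfl]
  by_cases hl : (l : ℕ) = 0
  · rw [hcol0 i l hl]
  · rw [hcol i l hl]; have := ha i; split_ifs <;> omega

theorem apply_le_zero_apply [NeZero d] (hA : IsAdmissible A) (l k : Fin d) : A l k ≤ A 0 k := by
  obtain ⟨a, σ, -, hmono, -, -, -, hcol0, hcol⟩ := hA
  by_cases hk : (k : ℕ) = 0
  · rw [hcol0 l k hk, hcol0 0 k hk]; exact hmono 0 l (Fin.zero_le l)
  · rw [hcol l k hk, hcol 0 k hk, if_pos (Fin.zero_le _)]; split_ifs <;> norm_num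

end IsAdmissible

theorem stmt_7 (d : ℕ) (hd : 2 ≤ d) (A A' : Matrix (Fin d) (Fin d) ℤ)
    (hA : IsAdmissible A) (hA' : IsAdmissible A') :
    (∀ i j, 0 < (A * A') i j) ∧
      hilbertDiam ((A * A').map (fun z : ℤ => (z : ℝ))) ≤ 2 * Real.log d := by
  have hd0 : NeZero d := ⟨by omega⟩
  have hlow (i k : Fin d) : A i 0 * A' 0 k ≤ (A * A') i k :=
    Matrix.apply_mul_apply_le_mul_apply (hA.nonneg i) (hA'.nonneg · k) 0
  have hupp (i k : Fin d) : (A * A') i k ≤ d * (A i 0 * A' 0 k) := by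
    simpa using Matrix.mul_apply_le_card_nsmul (hA.nonneg i) (hA'.nonneg · k)
      (hA.apply_le_apply_zero i) (hA'.apply_le_zero_apply · k)
  have hpos (i k : Fin d) : 0 < (A * A') i k :=
    (mul_pos (hA.apply_zero_pos i) (hA'.zero_apply_pos k)).trans_le (hlow i k)
  refine ⟨hpos, ?_⟩
  have hcross := cross_le_of_rankOne_sandwich (M := (A * A').map (fun z : ℤ => (z : ℝ)))
    (u := fun i => (A i 0 : ℝ)) (v := fun k => (A' 0 k : ℝ)) (C := d)
    (fun i => by exact_mod_cast (hA.apply_zero_pos i).le)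
    (fun k => by exact_mod_cast (hA'.zero_apply_pos k).le)
    (fun i k => by simpa using (Int.cast_le (R := ℝ)).mpr (hlow i k))
    (fun i k => by simpa using (Int.cast_le (R := ℝ)).mpr (hupp i k))
  calc hilbertDiam ((A * A').map (fun z : ℤ => (z : ℝ)))
      ≤ Real.log ((d : ℝ) ^ 2) :=
        hilbertDiam_le_log_of_cross (one_le_pow₀ (by exact_mod_cast hd0.one_le))
          (fun i k => by simpa using hpos i k) hcross
    _ = 2 * Real.log d := by rw [Real.log_pow]; norm_num
end

section
/- Every square admissible matrix is unimodular: its determinant equals ±1, so its inverse exists and has integer coefficients. -/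
theorem stmt_9 (d : ℕ) (hd : 2 ≤ d) (A : Matrix (Fin d) (Fin d) ℤ)
    (hA : IsAdmissible A) :
    (A.det = 1 ∨ A.det = -1) ∧ ∃ B : Matrix (Fin d) (Fin d) ℤ,
      A * B = 1 ∧ B * A = 1 := by
  obtain ⟨a, σ, hapos, hmono, halast, hinj, hσ0, hcol0, hcolj⟩ := hA
  have hd0 : 0 < d := by omega
  let e : Equiv.Perm (Fin d) := Equiv.ofBijective σ (Finite.injective_iff_bijective.mp hinj)
  set M : Matrix (Fin d) (Fin d) ℤ :=
    fun i k => if (k : ℕ) = d - 1 then a i else if i ≤ k then 1 else 0 with hM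
  have hAM : A = M.submatrix id e := by
    ext i j
    simp only [Matrix.submatrix_apply, id]
    have he : e j = σ j := rfl
    by_cases hj : (j : ℕ) = 0
    · rw [hcol0 i j hj, hM, he]
      simp [hσ0 j hj]
    · rw [hcolj i j hj, hM, he]
      have hne : ((σ j : ℕ)) ≠ d - 1 := by
        intro h
        have h0 : σ j = σ ⟨0, hd0⟩ := by
          have h1 := hσ0 ⟨0, hd0⟩ rfl
          exact Fin.ext (by omega)
        have := hinj h0
        apply hj
        rw [this]
      simp [hne]
  have hMtri : M.BlockTriangular id := by
    intro i j hij
    simp only [id] at hij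
    have h1 : (j : ℕ) ≠ d - 1 := by
      have := i.isLt
      have : (j : ℕ) < (i : ℕ) := hij
      omega
    have h2 : ¬ i ≤ j := not_le.mpr hij
    simp [hM, h1, h2]
  have hMdet : M.det = 1 := by
    rw [Matrix.det_of_upperTriangular hMtri]
    apply Finset.prod_eq_one
    intro i _
    by_cases h : (i : ℕ) = d - 1
    · simp [hM, h, halast i h]
    · simp [hM, h]
  have hdet : A.det = Equiv.Perm.sign e := by
    rw [hAM, Matrix.det_permute', hMdet, mul_one]; norm_cast
  have hsq : A.det * A.det = 1 := by
    rw [hdet]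
    rcases Int.units_eq_one_or (Equiv.Perm.sign e) with h | h <;> simp [h]
  have hpm : A.det = 1 ∨ A.det = -1 := by
    rcases Int.units_eq_one_or (Equiv.Perm.sign e) with h | h
    · left; rw [hdet, h]; rfl
    · right; rw [hdet, h]; rfl
  refine ⟨hpm, A.det • A.adjugate, ?_, ?_⟩
  · rw [Matrix.mul_smul, Matrix.mul_adjugate, smul_smul, hsq, one_smul]
  · rw [Matrix.smul_mul, Matrix.adjugate_mul, smul_smul, hsq, one_smul]
end

section
/- Let (d_n)_{n≥1} be a sequence of positive integers and for each n let A_n be a strictly positive d_n × d_{n+1} real matrix. Suppose there is D_0 > 0 such that D(A_n) ≤ D_0 for all n, where D(A) is the Hilbert-metric diameter of the image of the positive cone under A. Then the inverse limit {(x^{(n)})_{n≥1} ∈ Π_n (ℝ_{≥0})^{d_n} : x^{(n)} = A_n x^{(n+1)} for all n} is a ray: there exist vectors x^{(n)} ∈ (ℝ_{≥0})^{d_n} such that the inverse limit equals {(λ x^{(n)})_{n≥1} : λ ≥ 0}. -/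
open Finset Filter Topology Matrix

section Ratio

variable {n : Type*} [Fintype n] [Nonempty n]

noncomputable def maxRatio (u v : n → ℝ) : ℝ :=
  univ.sup' univ_nonempty fun i => u i / v i

noncomputable def minRatio (u v : n → ℝ) : ℝ :=
  univ.inf' univ_nonempty fun i => u i / v i

variable {u v : n → ℝ}

theorem maxRatio_le_iff (hv : ∀ i, 0 < v i) {c : ℝ} : maxRatio u v ≤ c ↔ u ≤ c • v := by
  simp only [maxRatio, sup'_le_iff, mem_univ, true_implies, Pi.le_def, Pi.smul_apply,
    smul_eq_mul, div_le_iff₀ (hv _)]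

theorem le_minRatio_iff (hv : ∀ i, 0 < v i) {c : ℝ} : c ≤ minRatio u v ↔ c • v ≤ u := by
  simp only [minRatio, le_inf'_iff, mem_univ, true_implies, Pi.le_def, Pi.smul_apply,
    smul_eq_mul, le_div_iff₀ (hv _)]

theorem le_maxRatio_smul (hv : ∀ i, 0 < v i) : u ≤ maxRatio u v • v :=
  (maxRatio_le_iff hv).1 le_rfl

theorem minRatio_smul_le (hv : ∀ i, 0 < v i) : minRatio u v • v ≤ u :=
  (le_minRatio_iff hv).1 le_rfl

theorem minRatio_le_maxRatio (u v : n → ℝ) : minRatio u v ≤ maxRatio u v := by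
  obtain ⟨i⟩ := ‹Nonempty n›
  exact (inf'_le _ (mem_univ i)).trans (le_sup' (fun i => u i / v i) (mem_univ i))

theorem minRatio_nonneg (hu : 0 ≤ u) (hv : 0 ≤ v) : 0 ≤ minRatio u v :=
  (le_inf'_iff _ _).2 fun i _ => div_nonneg (hu i) (hv i)

theorem minRatio_pos (hu : ∀ i, 0 < u i) (hv : ∀ i, 0 < v i) : 0 < minRatio u v :=
  (lt_inf'_iff _).2 fun i _ => div_pos (hu i) (hv i)

theorem hilbertTheta_eq_log (hu : ∀ i, 0 < u i) (hv : ∀ i, 0 < v i) :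
    hilbertTheta u v = Real.log (maxRatio v u / minRatio v u) := by
  have hmin : 0 < minRatio v u := minRatio_pos hv hu
  have hmax : 0 < maxRatio v u := hmin.trans_le (minRatio_le_maxRatio v u)
  have hupper : {μ : ℝ | 0 < μ ∧ ∀ i, v i ≤ μ * u i} = Set.Ici (maxRatio v u) := by
    ext μ
    rw [Set.mem_Ici, maxRatio_le_iff hu]
    exact ⟨fun h => h.2, fun h => ⟨hmax.trans_le ((maxRatio_le_iff hu).2 h), h⟩⟩
  have hlower : {l : ℝ | 0 < l ∧ ∀ i, l * u i ≤ v i} = Set.Ioc 0 (minRatio v u) := by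
    ext l
    rw [Set.mem_Ioc, le_minRatio_iff hu]
    rfl
  rw [hilbertTheta, hupper, hlower, csInf_Ici, csSup_Ioc hmin]

end Ratio

section PositiveMatrix

variable {m n : Type*} [Fintype n] {A : Matrix m n ℝ}

theorem exists_pos_le_entries [Fintype m] [Nonempty m] [Nonempty n] (hA : ∀ i j, 0 < A i j) :
    ∃ a, 0 < a ∧ ∀ i j, a ≤ A i j := by
  obtain ⟨p, hp⟩ := Finite.exists_min (Function.uncurry A)
  exact ⟨_, hA p.1 p.2, fun i j => hp (i, j)⟩

theorem exists_entries_le [Fintype m] (A : Matrix m n ℝ) : ∃ b, ∀ i j, A i j ≤ b := by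
  obtain ⟨b, hb⟩ := (Set.finite_range (Function.uncurry A)).bddAbove
  exact ⟨b, fun i j => hb ⟨(i, j), rfl⟩⟩

theorem mul_sum_le_mulVec_apply {a : ℝ} (ha : ∀ i j, a ≤ A i j) {y : n → ℝ} (hy : 0 ≤ y)
    (i : m) : a * ∑ j, y j ≤ (A *ᵥ y) i := by
  rw [mul_sum]
  exact sum_le_sum fun j _ => mul_le_mul_of_nonneg_right (ha i j) (hy j)

theorem mulVec_apply_le_mul_sum {b : ℝ} (hb : ∀ i j, A i j ≤ b) {y : n → ℝ} (hy : 0 ≤ y)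
    (i : m) : (A *ᵥ y) i ≤ b * ∑ j, y j := by
  rw [mul_sum]
  exact sum_le_sum fun j _ => mul_le_mul_of_nonneg_right (hb i j) (hy j)

theorem mulVec_mono_of_nonneg (hA : ∀ i j, 0 ≤ A i j) {y y' : n → ℝ} (h : y ≤ y') :
    A *ᵥ y ≤ A *ᵥ y' :=
  fun i => sum_le_sum fun j _ => mul_le_mul_of_nonneg_left (h j) (hA i j)

theorem mulVec_pos_of_pos (hA : ∀ i j, 0 < A i j) {y : n → ℝ} (hy : 0 < y) (i : m) :
    0 < (A *ᵥ y) i := by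
  obtain ⟨hy, j, hj⟩ := Pi.lt_def.1 hy
  exact sum_pos' (fun k _ => mul_nonneg (hA i k).le (hy k)) ⟨j, mem_univ j, mul_pos (hA i j) hj⟩

theorem mulVec_eq_zero_iff_of_pos [Nonempty m] (hA : ∀ i j, 0 < A i j)
    {y : n → ℝ} (hy : 0 ≤ y) : A *ᵥ y = 0 ↔ y = 0 := by
  refine ⟨fun h => by_contra fun hy0 => ?_, fun h => h ▸ mulVec_zero A⟩
  simpa [h] using mulVec_pos_of_pos hA (lt_of_le_of_ne hy (Ne.symm hy0)) (Classical.arbitrary m)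

theorem minRatio_le_minRatio_mulVec [Fintype m] [Nonempty m] [Nonempty n]
    (hA : ∀ i j, 0 < A i j) (u : n → ℝ) {v : n → ℝ} (hv : ∀ j, 0 < v j) :
    minRatio u v ≤ minRatio (A *ᵥ u) (A *ᵥ v) := by
  rw [le_minRatio_iff (mulVec_pos_of_pos hA (lt_of_strongLT hv)), ← mulVec_smul]
  exact mulVec_mono_of_nonneg (fun i j => (hA i j).le) (minRatio_smul_le hv)

theorem hilbertTheta_mulVec_le_log [Fintype m] [Nonempty m] [Nonempty n] {a b : ℝ}
    (ha0 : 0 < a) (ha : ∀ i j, a ≤ A i j) (hb : ∀ i j, A i j ≤ b) {w w' : n → ℝ} (hw : 0 < w)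
    (hw' : 0 < w') : hilbertTheta (A *ᵥ w) (A *ᵥ w') ≤ Real.log ((b / a) ^ 2) := by
  have hA : ∀ i j, 0 < A i j := fun i j => ha0.trans_le (ha i j)
  have hb0 : 0 < b := (hA _ _).trans_le (hb (Classical.arbitrary m) (Classical.arbitrary n))
  have hAw := mulVec_pos_of_pos hA hw
  have hAw' := mulVec_pos_of_pos hA hw'
  obtain ⟨S, hS_def, hS⟩ : ∃ S, S = ∑ j, w j ∧ 0 < S := ⟨_, rfl, Fintype.sum_pos hw⟩
  obtain ⟨S', hS'_def, hS'⟩ : ∃ S', S' = ∑ j, w' j ∧ 0 < S' := ⟨_, rfl, Fintype.sum_pos hw'⟩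
  have hmax : maxRatio (A *ᵥ w') (A *ᵥ w) ≤ b * S' / (a * S) := by
    refine (maxRatio_le_iff hAw).2 fun i => ?_
    calc (A *ᵥ w') i ≤ b * S' := hS'_def ▸ mulVec_apply_le_mul_sum hb hw'.le i
      _ = b * S' / (a * S) * (a * S) := by field_simp
      _ ≤ b * S' / (a * S) * (A *ᵥ w) i := by
        gcongr
        exact hS_def ▸ mul_sum_le_mulVec_apply ha hw.le i
  have hmin : a * S' / (b * S) ≤ minRatio (A *ᵥ w') (A *ᵥ w) := by
    refine (le_minRatio_iff hAw).2 fun i => ?_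
    calc a * S' / (b * S) * (A *ᵥ w) i ≤ a * S' / (b * S) * (b * S) := by
          gcongr
          exact hS_def ▸ mulVec_apply_le_mul_sum hb hw.le i
      _ = a * S' := by field_simp
      _ ≤ (A *ᵥ w') i := hS'_def ▸ mul_sum_le_mulVec_apply ha hw'.le i
  have hmin0 : 0 < minRatio (A *ᵥ w') (A *ᵥ w) := minRatio_pos hAw' hAw
  rw [hilbertTheta_eq_log hAw hAw']
  refine Real.log_le_log (div_pos (hmin0.trans_le (minRatio_le_maxRatio _ _)) hmin0) ?_
  calc maxRatio (A *ᵥ w') (A *ᵥ w) / minRatio (A *ᵥ w') (A *ᵥ w)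
      ≤ b * S' / (a * S) / (a * S' / (b * S)) :=
        div_le_div₀ (by positivity) hmax (by positivity) hmin
    _ = (b / a) ^ 2 := by field_simp

theorem hilbertTheta_mulVec_le_hilbertDiam [Fintype m] [Nonempty m] [Nonempty n]
    (hA : ∀ i j, 0 < A i j) {y y' : n → ℝ} (hy : 0 < y) (hy' : 0 < y') :
    hilbertTheta (A *ᵥ y) (A *ᵥ y') ≤ hilbertDiam A := by
  obtain ⟨a, ha0, ha⟩ := exists_pos_le_entries hA
  obtain ⟨b, hb⟩ := exists_entries_le A
  refine le_csSup ⟨Real.log ((b / a) ^ 2), ?_⟩ ⟨y, y', hy.le, hy.ne', hy'.le, hy'.ne', rfl⟩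
  rintro _ ⟨w, w', hw, hw0, hw', hw0', rfl⟩
  exact hilbertTheta_mulVec_le_log ha0 ha hb (lt_of_le_of_ne hw hw0.symm)
    (lt_of_le_of_ne hw' hw0'.symm)

theorem maxRatio_mulVec_le_exp_mul_minRatio [Fintype m] [Nonempty m] [Nonempty n]
    (hA : ∀ i j, 0 < A i j) {D : ℝ} (hD : hilbertDiam A ≤ D) {y : n → ℝ} (hy : 0 < y)
    {w : n → ℝ} (hw : 0 ≤ w) :
    maxRatio (A *ᵥ w) (A *ᵥ y) ≤ Real.exp D * minRatio (A *ᵥ w) (A *ᵥ y) := by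
  rcases hw.eq_or_lt with rfl | hw
  · simp [maxRatio, minRatio]
  have hAy := mulVec_pos_of_pos hA hy
  have hAw := mulVec_pos_of_pos hA hw
  have hmin := minRatio_pos hAw hAy
  have hΘ := (hilbertTheta_mulVec_le_hilbertDiam hA hy hw).trans hD
  rwa [hilbertTheta_eq_log hAy hAw,
    Real.log_le_iff_le_exp (div_pos (hmin.trans_le (minRatio_le_maxRatio _ _)) hmin),
    div_le_iff₀ hmin] at hΘ

/-- Hopf's oscillation estimate. Writing `u = μ • v + w = M • v - w'` with `w, w' ≥ 0`, the
ratio bound `hK` applied to `A *ᵥ w` and `A *ᵥ w'` shrinks the range of `A *ᵥ u / A *ᵥ v` by at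
least `(M - μ) / K`. -/
theorem maxRatio_sub_minRatio_mulVec_le [Fintype m] [Nonempty m] [Nonempty n] {K : ℝ}
    (hK0 : 0 < K) {u v : n → ℝ} (hv : ∀ j, 0 < v j) (hAv : ∀ i, 0 < (A *ᵥ v) i)
    (hK : ∀ w, 0 ≤ w → maxRatio (A *ᵥ w) (A *ᵥ v) ≤ K * minRatio (A *ᵥ w) (A *ᵥ v)) :
    maxRatio (A *ᵥ u) (A *ᵥ v) - minRatio (A *ᵥ u) (A *ᵥ v) ≤
      (1 - K⁻¹) * (maxRatio u v - minRatio u v) := by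
  set M := maxRatio u v
  set μ := minRatio u v
  set l := minRatio (A *ᵥ (u - μ • v)) (A *ᵥ v)
  set l' := minRatio (A *ᵥ (M • v - u)) (A *ᵥ v)
  have hw : 0 ≤ u - μ • v := sub_nonneg.2 (minRatio_smul_le hv)
  have hw' : 0 ≤ M • v - u := sub_nonneg.2 (le_maxRatio_smul hv)
  have hu : A *ᵥ u = μ • (A *ᵥ v) + A *ᵥ (u - μ • v) := by
    rw [mulVec_sub, mulVec_smul, add_sub_cancel]
  have hu' : A *ᵥ u = M • (A *ᵥ v) - A *ᵥ (M • v - u) := by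
    rw [mulVec_sub, mulVec_smul, sub_sub_cancel]
  have hlow : μ + l ≤ minRatio (A *ᵥ u) (A *ᵥ v) := by
    refine (le_minRatio_iff hAv).2 ?_
    rw [add_smul, hu]
    exact add_le_add le_rfl (minRatio_smul_le hAv)
  have hup : maxRatio (A *ᵥ u) (A *ᵥ v) ≤ M - l' := by
    refine (maxRatio_le_iff hAv).2 ?_
    rw [sub_smul, hu']
    exact sub_le_sub_left (minRatio_smul_le hAv) _
  have hsum : M - μ ≤ K * (l + l') := by
    obtain ⟨i⟩ := ‹Nonempty m›
    refine le_of_mul_le_mul_right ?_ (hAv i)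
    have hi := congrFun hu i
    have hi' := congrFun hu' i
    simp only [Pi.add_apply, Pi.sub_apply, Pi.smul_apply, smul_eq_mul] at hi hi'
    calc (M - μ) * (A *ᵥ v) i = (A *ᵥ (u - μ • v)) i + (A *ᵥ (M • v - u)) i := by linarith
      _ ≤ maxRatio (A *ᵥ (u - μ • v)) (A *ᵥ v) * (A *ᵥ v) i +
          maxRatio (A *ᵥ (M • v - u)) (A *ᵥ v) * (A *ᵥ v) i :=
        add_le_add (le_maxRatio_smul hAv i) (le_maxRatio_smul hAv i)
      _ ≤ K * l * (A *ᵥ v) i + K * l' * (A *ᵥ v) i :=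
        add_le_add (mul_le_mul_of_nonneg_right (hK _ hw) (hAv i).le)
          (mul_le_mul_of_nonneg_right (hK _ hw') (hAv i).le)
      _ = K * (l + l') * (A *ᵥ v) i := by ring
  have hsum' : (M - μ) * K⁻¹ ≤ l + l' := by
    rwa [← div_eq_mul_inv, div_le_iff₀ hK0, mul_comm]
  linarith [show (1 - K⁻¹) * (M - μ) = (M - μ) - (M - μ) * K⁻¹ by ring]

end PositiveMatrix

theorem eq_zero_of_le_mul_succ {o : ℕ → ℝ} {θ B : ℝ} (hθ : θ < 1) (ho : ∀ n, 0 ≤ o n)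
    (hB : ∀ n, o n ≤ B) (hstep : ∀ n, o n ≤ θ * o (n + 1)) (n : ℕ) : o n = 0 := by
  set θ' := max θ 0
  have hθ' : 0 ≤ θ' := le_max_right θ 0
  have hpow : ∀ k n, o n ≤ θ' ^ k * B := by
    intro k
    induction k with
    | zero => simpa using hB
    | succ k ih =>
      intro n
      calc o n ≤ θ' * o (n + 1) :=
            (hstep n).trans (mul_le_mul_of_nonneg_right (le_max_left θ 0) (ho _))
        _ ≤ θ' * (θ' ^ k * B) := mul_le_mul_of_nonneg_left (ih _) hθ'
        _ = θ' ^ (k + 1) * B := by ring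
  have hlim : Tendsto (fun k => θ' ^ k * B) atTop (𝓝 0) := by
    simpa using (tendsto_pow_atTop_nhds_zero_of_lt_one hθ' (max_lt hθ one_pos)).mul_const B
  exact le_antisymm (ge_of_tendsto' hlim fun k => hpow k n) (ho n)

section InverseLimit

variable {ι : ℕ → Type*} [∀ n, Fintype (ι n)]

def inverseLimit (A : ∀ n, Matrix (ι n) (ι (n + 1)) ℝ) : Set (∀ n, ι n → ℝ) :=
  {z | 0 ≤ z ∧ ∀ n, z n = A n *ᵥ z (n + 1)}

variable {A : ∀ n, Matrix (ι n) (ι (n + 1)) ℝ}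

theorem smul_mem_inverseLimit {x : ∀ n, ι n → ℝ} (hx : x ∈ inverseLimit A) {c : ℝ}
    (hc : 0 ≤ c) : c • x ∈ inverseLimit A :=
  ⟨smul_nonneg hc hx.1, fun n => by rw [Pi.smul_apply, Pi.smul_apply, mulVec_smul, ← hx.2 n]⟩

theorem eq_smul_of_forall_eq_smul {x z : ∀ n, ι n → ℝ} (hx : x ∈ inverseLimit A)
    (hz : z ∈ inverseLimit A) (hx0 : ∀ n, x n ≠ 0) {c : ℕ → ℝ} (hc : ∀ n, z n = c n • x n) :
    z = c 0 • x := by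
  have hsucc : ∀ n, c (n + 1) = c n := fun n => smul_left_injective ℝ (hx0 n) <| by
    show c (n + 1) • x n = c n • x n
    rw [← hc n, hz.2 n, hc (n + 1), mulVec_smul, ← hx.2 n]
  have hconst : ∀ n, c n = c 0 := fun n => by
    induction n with
    | zero => rfl
    | succ n ih => rw [hsucc, ih]
  funext n
  rw [hc n, hconst n, Pi.smul_apply]

variable (A) in
noncomputable def backwardOrbit (m : ℕ) : ∀ k, ι k → ℝ
  | k => if k < m then A k *ᵥ backwardOrbit m (k + 1) else if k = m then 1 else 0
termination_by k => m - k

theorem backwardOrbit_of_lt {m k : ℕ} (h : k < m) :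
    backwardOrbit A m k = A k *ᵥ backwardOrbit A m (k + 1) := by
  rw [backwardOrbit, if_pos h]

theorem backwardOrbit_self (m : ℕ) : backwardOrbit A m m = 1 := by
  rw [backwardOrbit, if_neg (lt_irrefl m), if_pos rfl]

theorem backwardOrbit_of_gt {m k : ℕ} (h : m < k) : backwardOrbit A m k = 0 := by
  rw [backwardOrbit, if_neg (by omega), if_neg (by omega)]

theorem backwardOrbit_nonneg (hA : ∀ n i j, 0 ≤ A n i j) (m : ℕ) : 0 ≤ backwardOrbit A m := by
  intro k
  fun_induction backwardOrbit A m k with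
  | case1 _ k _ ih => simpa using mulVec_mono_of_nonneg (hA k) ih
  | case2 => exact zero_le_one
  | case3 => exact le_rfl

variable [∀ n, Nonempty (ι n)]

theorem eq_zero_iff_of_forall_lt_eq_mulVec (hA : ∀ n i j, 0 < A n i j)
    {z : ∀ n, ι n → ℝ} (hz : 0 ≤ z) {m : ℕ} (hrec : ∀ k < m, z k = A k *ᵥ z (k + 1))
    {k : ℕ} (hk : k ≤ m) : z k = 0 ↔ z 0 = 0 := by
  induction k with
  | zero => rfl
  | succ k ih =>
    rw [← ih (by omega), hrec k (by omega), mulVec_eq_zero_iff_of_pos (hA k) (hz (k + 1))]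

theorem pos_of_mem_inverseLimit (hA : ∀ n i j, 0 < A n i j) {z : ∀ n, ι n → ℝ}
    (hz : z ∈ inverseLimit A) (hz0 : z 0 ≠ 0) (n : ℕ) (i : ι n) : 0 < z n i := by
  have hne : z (n + 1) ≠ 0 :=
    mt (eq_zero_iff_of_forall_lt_eq_mulVec hA hz.1 (fun k _ => hz.2 k) le_rfl).1 hz0
  rw [hz.2 n]
  exact mulVec_pos_of_pos (hA n) (lt_of_le_of_ne (hz.1 _) hne.symm) i

theorem maxRatio_eq_minRatio_of_mem_inverseLimit (hA : ∀ n i j, 0 < A n i j) {D₀ : ℝ}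
    (hD : ∀ n, hilbertDiam (A n) ≤ D₀) {x z : ∀ n, ι n → ℝ} (hx : x ∈ inverseLimit A)
    (hxpos : ∀ n i, 0 < x n i) (hz : z ∈ inverseLimit A) (n : ℕ) :
    maxRatio (z n) (x n) = minRatio (z n) (x n) := by
  set K := Real.exp D₀
  have hK : ∀ n w, 0 ≤ w → maxRatio (A n *ᵥ w) (A n *ᵥ x (n + 1)) ≤
      K * minRatio (A n *ᵥ w) (A n *ᵥ x (n + 1)) := fun n _ hw =>
    maxRatio_mulVec_le_exp_mul_minRatio (hA n) (hD n) (lt_of_strongLT (hxpos (n + 1))) hw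
  have hosc : ∀ n, maxRatio (z n) (x n) - minRatio (z n) (x n) ≤
      (1 - K⁻¹) * (maxRatio (z (n + 1)) (x (n + 1)) - minRatio (z (n + 1)) (x (n + 1))) := by
    intro n
    have := maxRatio_sub_minRatio_mulVec_le (Real.exp_pos D₀) (u := z (n + 1)) (hxpos (n + 1))
      (mulVec_pos_of_pos (hA n) (lt_of_strongLT (hxpos (n + 1)))) (hK n)
    rwa [← hz.2 n, ← hx.2 n] at this
  have hmax : ∀ n, maxRatio (z n) (x n) ≤ K * minRatio (z n) (x n) := fun n => by
    have := hK n (z (n + 1)) (hz.1 _)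
    rwa [← hz.2 n, ← hx.2 n] at this
  have hmin : Antitone fun n => minRatio (z n) (x n) := antitone_nat_of_succ_le fun n => by
    have := minRatio_le_minRatio_mulVec (hA n) (z (n + 1)) (hxpos (n + 1))
    rwa [← hz.2 n, ← hx.2 n] at this
  refine sub_eq_zero.1 (eq_zero_of_le_mul_succ (B := K * minRatio (z 0) (x 0))
    (sub_lt_self 1 (inv_pos.2 (Real.exp_pos D₀))) (fun n => sub_nonneg.2 (minRatio_le_maxRatio _ _))
    (fun n => ?_) hosc n)
  calc maxRatio (z n) (x n) - minRatio (z n) (x n) ≤ K * minRatio (z n) (x n) := by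
        linarith [hmax n, minRatio_nonneg (hz.1 n) (hx.1 n)]
    _ ≤ K * minRatio (z 0) (x 0) := by
        gcongr; exact hmin (Nat.zero_le n)

theorem exists_nonneg_eq_smul_of_mem_inverseLimit (hA : ∀ n i j, 0 < A n i j) {D₀ : ℝ}
    (hD : ∀ n, hilbertDiam (A n) ≤ D₀) {x z : ∀ n, ι n → ℝ} (hx : x ∈ inverseLimit A)
    (hx0 : x 0 ≠ 0) (hz : z ∈ inverseLimit A) : ∃ c : ℝ, 0 ≤ c ∧ z = c • x := by
  have hxpos := pos_of_mem_inverseLimit hA hx hx0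
  refine ⟨minRatio (z 0) (x 0), minRatio_nonneg (hz.1 0) (hx.1 0),
    eq_smul_of_forall_eq_smul hx hz (fun n => (lt_of_strongLT (hxpos n)).ne')
      (c := fun n => minRatio (z n) (x n)) fun n => ?_⟩
  refine le_antisymm ?_ (minRatio_smul_le (hxpos n))
  rw [← maxRatio_eq_minRatio_of_mem_inverseLimit hA hD hx hxpos hz n]
  exact le_maxRatio_smul (hxpos n)

theorem exists_normalized_chain (hA : ∀ n i j, 0 < A n i j) (m : ℕ) :
    ∃ z : ∀ n, ι n → ℝ, 0 ≤ z ∧ ∑ i, z 0 i = 1 ∧ (∀ k < m, z k = A k *ᵥ z (k + 1)) ∧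
      ∀ k, m < k → z k = 0 := by
  set o := backwardOrbit A m
  have ho : 0 ≤ o := backwardOrbit_nonneg (fun n i j => (hA n i j).le) m
  have hrec : ∀ k < m, o k = A k *ᵥ o (k + 1) := fun k => backwardOrbit_of_lt
  have ho0 : o 0 ≠ 0 := by
    have hself : o m = 1 := backwardOrbit_self m
    rw [Ne, ← eq_zero_iff_of_forall_lt_eq_mulVec hA ho hrec le_rfl, hself]
    exact one_ne_zero
  have hS : 0 < ∑ i, o 0 i := Fintype.sum_pos (lt_of_le_of_ne (ho 0) (Ne.symm ho0))
  refine ⟨(∑ i, o 0 i)⁻¹ • o, smul_nonneg (inv_nonneg.2 hS.le) ho, ?_, fun k hk => ?_,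
    fun k hk => by rw [Pi.smul_apply, show o k = 0 from backwardOrbit_of_gt hk, smul_zero]⟩
  · simp only [Pi.smul_apply, smul_eq_mul, ← mul_sum, inv_mul_cancel₀ hS.ne']
  · rw [Pi.smul_apply, Pi.smul_apply, mulVec_smul, hrec k hk]

theorem le_prod_inv_of_forall_lt_eq_mulVec {a : ℕ → ℝ} (ha0 : ∀ n, 0 < a n)
    (ha : ∀ n i j, a n ≤ A n i j) {z : ∀ n, ι n → ℝ} (hz : 0 ≤ z) (h0 : ∑ i, z 0 i = 1)
    {m : ℕ} (hrec : ∀ k < m, z k = A k *ᵥ z (k + 1)) {k : ℕ} (hk : k ≤ m) (i : ι k) :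
    z k i ≤ ∏ l ∈ range k, (a l)⁻¹ := by
  induction k with
  | zero =>
    rw [prod_range_zero, ← h0]
    exact single_le_sum (fun j _ => hz 0 j) (mem_univ i)
  | succ k ih =>
    let i₀ := Classical.arbitrary (ι k)
    rw [prod_range_succ, ← div_eq_mul_inv, le_div_iff₀ (ha0 k), mul_comm]
    calc a k * z (k + 1) i ≤ a k * ∑ j, z (k + 1) j :=
          mul_le_mul_of_nonneg_left (single_le_sum (fun j _ => hz _ j) (mem_univ i)) (ha0 k).le
      _ ≤ (A k *ᵥ z (k + 1)) i₀ := mul_sum_le_mulVec_apply (ha k) (hz _) i₀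
      _ = z k i₀ := (congrFun (hrec k (by omega)) i₀).symm
      _ ≤ _ := ih (by omega) i₀

theorem exists_mem_inverseLimit_ne_zero (hA : ∀ n i j, 0 < A n i j) :
    ∃ x ∈ inverseLimit A, x 0 ≠ 0 := by
  choose a ha0 ha using fun n => exists_pos_le_entries (hA n)
  let box : Set (∀ n, ι n → ℝ) :=
    Set.univ.pi fun k => Set.univ.pi fun _ => Set.Icc 0 (∏ l ∈ range k, (a l)⁻¹)
  let chains : ℕ → Set (∀ n, ι n → ℝ) := fun m =>
    box ∩ {z | ∑ i, z 0 i = 1} ∩ {z | ∀ k < m, z k = A k *ᵥ z (k + 1)}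
  have hclosed : ∀ m, IsClosed (chains m) := fun m => by
    refine ((isClosed_set_pi fun k _ => isClosed_set_pi fun _ _ => isClosed_Icc).inter
      (isClosed_eq (continuous_finsetSum _ fun i _ => (continuous_apply i).comp
        (continuous_apply 0)) continuous_const)).inter ?_
    simp only [Set.ofPred_forall]
    exact isClosed_iInter fun k => isClosed_iInter fun _ =>
      isClosed_eq (continuous_apply k) (continuous_const.matrix_mulVec (continuous_apply (k + 1)))
  have hne : ∀ m, (chains m).Nonempty := fun m => by
    obtain ⟨z, hz, hsum, hrec, hzero⟩ := exists_normalized_chain hA m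
    refine ⟨z, ⟨fun k _ i _ => ⟨hz k i, ?_⟩, hsum⟩, hrec⟩
    rcases le_or_gt k m with hk | hk
    · exact le_prod_inv_of_forall_lt_eq_mulVec ha0 ha hz hsum hrec hk i
    · rw [hzero k hk]
      exact prod_nonneg fun l _ => (inv_pos.2 (ha0 l)).le
  obtain ⟨x, hx⟩ := IsCompact.nonempty_iInter_of_sequence_nonempty_isCompact_isClosed chains
    (fun m => Set.inter_subset_inter_right _ fun z hz k hk => hz k (by omega)) hne
    ((isCompact_univ_pi fun k => isCompact_univ_pi fun _ => isCompact_Icc).of_isClosed_subset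
      (hclosed 0) fun z hz => hz.1.1) hclosed
  rw [Set.mem_iInter] at hx
  refine ⟨x, ⟨fun n i => ((hx 0).1.1 n trivial i trivial).1,
    fun n => (hx (n + 1)).2 n n.lt_succ_self⟩, fun h => ?_⟩
  simpa [h] using (hx 0).1.2

theorem inverseLimit_eq_ray (hA : ∀ n i j, 0 < A n i j) {D₀ : ℝ}
    (hD : ∀ n, hilbertDiam (A n) ≤ D₀) :
    ∃ x : ∀ n, ι n → ℝ, 0 ≤ x ∧ inverseLimit A = {z | ∃ l : ℝ, 0 ≤ l ∧ z = l • x} := by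
  obtain ⟨x, hx, hx0⟩ := exists_mem_inverseLimit_ne_zero hA
  refine ⟨x, hx.1, Set.ext fun z =>
    ⟨exists_nonneg_eq_smul_of_mem_inverseLimit hA hD hx hx0, ?_⟩⟩
  rintro ⟨l, hl, rfl⟩
  exact smul_mem_inverseLimit hx hl

end InverseLimit

theorem stmt_10_general (d : ℕ → ℕ) (hd : ∀ n, 0 < d n)
    (A : ∀ n : ℕ, Matrix (Fin (d n)) (Fin (d (n + 1))) ℝ)
    (hA : ∀ n i j, 0 < A n i j)
    (D₀ : ℝ) (hbound : ∀ n, hilbertDiam (A n) ≤ D₀) :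
    ∃ x : ∀ n : ℕ, Fin (d n) → ℝ, (∀ n i, 0 ≤ x n i) ∧
      {z : ∀ n : ℕ, Fin (d n) → ℝ |
          (∀ n i, 0 ≤ z n i) ∧ ∀ n, z n = (A n).mulVec (z (n + 1))} =
        {z : ∀ n : ℕ, Fin (d n) → ℝ | ∃ l : ℝ, 0 ≤ l ∧ z = fun n => l • x n} := by
  have : ∀ n, Nonempty (Fin (d n)) := fun n => Fin.pos_iff_nonempty.1 (hd n)
  exact inverseLimit_eq_ray hA hbound

theorem stmt_10 (d : ℕ → ℕ) (hd : ∀ n, 0 < d n)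
    (A : ∀ n : ℕ, Matrix (Fin (d n)) (Fin (d (n + 1))) ℝ)
    (hA : ∀ n i j, 0 < A n i j)
    (D₀ : ℝ) (hD₀ : 0 < D₀) (hbound : ∀ n, hilbertDiam (A n) ≤ D₀) :
    ∃ x : ∀ n : ℕ, Fin (d n) → ℝ, (∀ n i, 0 ≤ x n i) ∧
      {z : ∀ n : ℕ, Fin (d n) → ℝ |
          (∀ n i, 0 ≤ z n i) ∧ ∀ n, z n = (A n).mulVec (z (n + 1))} =
        {z : ∀ n : ℕ, Fin (d n) → ℝ | ∃ l : ℝ, 0 ≤ l ∧ z = fun n => l • x n} :=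
  stmt_10_general d hd A hA D₀ hbound
end

section
/- Let Q : ℕ∪{0} → ℕ∪{0} satisfy Q(0) = 0 and Q(k) ≤ k − 1 for all k ≥ 1, and define the sequence (S_k) by S_0 = 1 and S_k = S_{k−1} + S_{Q(k)} for k ≥ 1. Then (S_k)_{k≥0} is strictly increasing, and for every nonnegative integer n there exists a unique sequence (x_k)_{k≥0} ∈ {0,1}^{ℕ∪{0}} with finitely many 1's such that Σ_{k≥0} x_k S_k = n and, whenever x_k = 1, then x_j = 0 for all j with Q(k+1) ≤ j ≤ k−1. -/
open Finset

/-! An admissible digit set contained in `[0, N)` has value `< S N`: if the top digit `N - 1`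
is present, admissibility confines the others to `[0, Q N)`, and `S N = S (N - 1) + S (Q N)`.
So the top digit of an admissible representation of `n` is the largest `k` with `S k ≤ n`,
which gives uniqueness; existence is the greedy algorithm, run as the same induction on `N`. -/

namespace OdometerScale

variable {Q S : ℕ → ℕ}

theorem pos (hS0 : 0 < S 0) (hSrec : ∀ k, S (k + 1) = S k + S (Q (k + 1))) (k : ℕ) :
    0 < S k := by
  induction k with
  | zero => exact hS0
  | succ k ih => rw [hSrec]; omega

theorem strictMono (hS0 : 0 < S 0) (hSrec : ∀ k, S (k + 1) = S k + S (Q (k + 1))) :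
    StrictMono S :=
  strictMono_nat_of_lt_succ fun k => by
    have := pos hS0 hSrec (Q (k + 1))
    rw [hSrec]; omega

def IsAdmissible (Q : ℕ → ℕ) (s : Finset ℕ) : Prop :=
  ∀ k ∈ s, ∀ j ∈ s, j < k → j < Q (k + 1)

theorem IsAdmissible.mono {s t : Finset ℕ} (hs : IsAdmissible Q s) (hts : t ⊆ s) :
    IsAdmissible Q t :=
  fun k hk j hj => hs k (hts hk) j (hts hj)

theorem isAdmissible_insert {M : ℕ} {t : Finset ℕ} (ht : t ⊆ range M) :
    IsAdmissible Q (insert M t) ↔ IsAdmissible Q t ∧ t ⊆ range (Q (M + 1)) := by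
  have hlt : ∀ j ∈ t, j < M := fun j hj => mem_range.1 (ht hj)
  constructor
  · intro h
    refine ⟨h.mono (subset_insert M t), fun j hj => mem_range.2 ?_⟩
    exact h M (mem_insert_self M t) j (mem_insert_of_mem hj) (hlt j hj)
  · rintro ⟨ht, htQ⟩ k hk j hj hjk
    rcases mem_insert.1 hk with rfl | hkt
    · rcases mem_insert.1 hj with rfl | hjt
      · omega
      · exact mem_range.1 (htQ hjt)
    · rcases mem_insert.1 hj with rfl | hjt
      · exact absurd (hlt k hkt) (by omega)
      · exact ht k hkt j hjt hjk

theorem sum_lt_of_subset_range (hQ : ∀ k, Q (k + 1) ≤ k) (hS0 : 0 < S 0)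
    (hSrec : ∀ k, S (k + 1) = S k + S (Q (k + 1))) {N : ℕ} {s : Finset ℕ}
    (hs : IsAdmissible Q s) (hsN : s ⊆ range N) : ∑ k ∈ s, S k < S N := by
  induction N using Nat.strong_induction_on generalizing s with
  | _ N ih =>
  cases N with
  | zero => rw [subset_empty.1 hsN, sum_empty]; exact hS0
  | succ M =>
    rw [hSrec]
    by_cases hM : M ∈ s
    · have hsM : s.erase M ⊆ range M := subset_insert_iff.1 (range_add_one ▸ hsN)
      rw [← insert_erase hM, isAdmissible_insert hsM] at hs
      rw [← insert_erase hM, sum_insert (notMem_erase M s)]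
      have := ih _ (Nat.lt_succ_of_le (hQ M)) hs.1 hs.2
      omega
    · have hsM : s ⊆ range M := (subset_insert_iff_of_notMem hM).1 (range_add_one ▸ hsN)
      have := ih M (lt_add_one M) hs hsM
      omega

theorem exists_isAdmissible_sum_eq (hQ : ∀ k, Q (k + 1) ≤ k) (hS0 : S 0 = 1)
    (hSrec : ∀ k, S (k + 1) = S k + S (Q (k + 1))) {N n : ℕ} (hn : n < S N) :
    ∃ s, IsAdmissible Q s ∧ s ⊆ range N ∧ ∑ k ∈ s, S k = n := by
  induction N using Nat.strong_induction_on generalizing n with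
  | _ N ih =>
  cases N with
  | zero =>
    exact ⟨∅, fun k hk => absurd hk (notMem_empty k), empty_subset _, by rw [sum_empty]; omega⟩
  | succ M =>
    by_cases hnM : n < S M
    · obtain ⟨s, hs, hsM, rfl⟩ := ih M (lt_add_one M) hnM
      exact ⟨s, hs, hsM.trans (range_subset_range.2 M.le_succ), rfl⟩
    · rw [hSrec] at hn
      obtain ⟨t, ht, htQ, htsum⟩ :=
        ih (Q (M + 1)) (Nat.lt_succ_of_le (hQ M)) (show n - S M < S (Q (M + 1)) by omega)
      have htM : t ⊆ range M := htQ.trans (range_subset_range.2 (hQ M))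
      refine ⟨insert M t, (isAdmissible_insert htM).2 ⟨ht, htQ⟩,
        range_add_one ▸ insert_subset_insert M htM, ?_⟩
      rw [sum_insert fun h => by simpa using htM h]
      omega

theorem mem_of_le_sum (hQ : ∀ k, Q (k + 1) ≤ k) (hS0 : 0 < S 0)
    (hSrec : ∀ k, S (k + 1) = S k + S (Q (k + 1))) {M : ℕ} {s : Finset ℕ}
    (hs : IsAdmissible Q s) (hsM : s ⊆ range (M + 1)) (hle : S M ≤ ∑ k ∈ s, S k) : M ∈ s := by
  by_contra hM
  have := sum_lt_of_subset_range hQ hS0 hSrec hs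
    ((subset_insert_iff_of_notMem hM).1 (range_add_one ▸ hsM))
  omega

theorem eq_of_sum_eq_of_subset_range (hQ : ∀ k, Q (k + 1) ≤ k) (hS0 : 0 < S 0)
    (hSrec : ∀ k, S (k + 1) = S k + S (Q (k + 1))) {N : ℕ} {s t : Finset ℕ}
    (hs : IsAdmissible Q s) (ht : IsAdmissible Q t) (hsN : s ⊆ range N) (htN : t ⊆ range N)
    (hst : ∑ k ∈ s, S k = ∑ k ∈ t, S k) : s = t := by
  induction N generalizing s t with
  | zero => rw [subset_empty.1 hsN, subset_empty.1 htN]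
  | succ M ih =>
    have hsM : s.erase M ⊆ range M := subset_insert_iff.1 (range_add_one ▸ hsN)
    have htM : t.erase M ⊆ range M := subset_insert_iff.1 (range_add_one ▸ htN)
    by_cases hM : M ∈ s
    · have hMt : M ∈ t := mem_of_le_sum hQ hS0 hSrec ht htN
        (hst ▸ single_le_sum (fun _ _ => Nat.zero_le _) hM)
      rw [← insert_erase hM, ← insert_erase hMt] at hst ⊢
      rw [sum_insert (notMem_erase M s), sum_insert (notMem_erase M t)] at hst
      rw [ih (hs.mono (erase_subset M s)) (ht.mono (erase_subset M t)) hsM htM (by omega)]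
    · have hMt : M ∉ t := fun hMt => hM <| mem_of_le_sum hQ hS0 hSrec hs hsN
        (hst ▸ single_le_sum (fun _ _ => Nat.zero_le _) hMt)
      rw [erase_eq_of_notMem hM] at hsM
      rw [erase_eq_of_notMem hMt] at htM
      exact ih hs ht hsM htM hst

theorem eq_of_sum_eq (hQ : ∀ k, Q (k + 1) ≤ k) (hS0 : 0 < S 0)
    (hSrec : ∀ k, S (k + 1) = S k + S (Q (k + 1))) {s t : Finset ℕ}
    (hs : IsAdmissible Q s) (ht : IsAdmissible Q t) (hst : ∑ k ∈ s, S k = ∑ k ∈ t, S k) :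
    s = t := by
  obtain ⟨N, hN⟩ := (s ∪ t).exists_nat_subset_range
  exact eq_of_sum_eq_of_subset_range hQ hS0 hSrec hs ht (subset_union_left.trans hN)
    (subset_union_right.trans hN) hst

def digitsOf (s : Finset ℕ) (k : ℕ) : ℕ := if k ∈ s then 1 else 0

theorem digitsOf_le_one (s : Finset ℕ) (k : ℕ) : digitsOf s k ≤ 1 := by
  unfold digitsOf; split_ifs <;> omega

theorem digitsOf_eq_one_iff {s : Finset ℕ} {k : ℕ} : digitsOf s k = 1 ↔ k ∈ s := by
  simp [digitsOf]

theorem digitsOf_eq_zero_iff {s : Finset ℕ} {k : ℕ} : digitsOf s k = 0 ↔ k ∉ s := by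
  simp [digitsOf]

theorem finsum_digitsOf_mul (S : ℕ → ℕ) (s : Finset ℕ) :
    ∑ᶠ k, digitsOf s k * S k = ∑ k ∈ s, S k := by
  rw [finsum_eq_sum_of_support_subset (s := s) _ <| Function.support_subset_iff'.2 fun k hk => by
    simp_all [digitsOf]]
  exact sum_congr rfl fun k hk => by simp [digitsOf, hk]

theorem exists_eq_digitsOf {x : ℕ → ℕ} (hx : ∀ k, x k ≤ 1) (hfin : {k | x k = 1}.Finite) :
    ∃ s, x = digitsOf s :=
  ⟨hfin.toFinset, funext fun k => by
    rcases Nat.le_one_iff_eq_zero_or_eq_one.1 (hx k) with h | h <;> simp [digitsOf, h]⟩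

theorem digitsOf_admissible_iff {s : Finset ℕ} :
    (∀ k, digitsOf s k = 1 → ∀ j, Q (k + 1) ≤ j → j < k → digitsOf s j = 0) ↔
      IsAdmissible Q s := by
  simp only [digitsOf_eq_one_iff, digitsOf_eq_zero_iff, IsAdmissible]
  grind

end OdometerScale

open OdometerScale in
theorem stmt_16_general (Q : ℕ → ℕ) (hQ : ∀ k, 1 ≤ k → Q k + 1 ≤ k)
    (S : ℕ → ℕ) (hS0 : S 0 = 1) (hSrec : ∀ k, S (k + 1) = S k + S (Q (k + 1))) :
    StrictMono S ∧
      ∀ n : ℕ, ∃! x : ℕ → ℕ,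
        (∀ k, x k ≤ 1) ∧ (Set.Finite {k : ℕ | x k = 1}) ∧
        (∑ᶠ k : ℕ, x k * S k) = n ∧
        (∀ k, x k = 1 → ∀ j, Q (k + 1) ≤ j → j < k → x j = 0) := by
  have hQ' : ∀ k, Q (k + 1) ≤ k := fun k => by have := hQ (k + 1) (by omega); omega
  have hSpos : 0 < S 0 := by omega
  have hmono := OdometerScale.strictMono hSpos hSrec
  refine ⟨hmono, fun n => ?_⟩
  obtain ⟨s, hs, -, rfl⟩ := exists_isAdmissible_sum_eq hQ' hS0 hSrec
    (show n < S n by have := hmono.add_le_nat n 0; rw [add_zero] at this; omega)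
  refine ⟨digitsOf s, ⟨digitsOf_le_one s, s.finite_toSet.subset fun _ => digitsOf_eq_one_iff.1,
    finsum_digitsOf_mul S s, digitsOf_admissible_iff.2 hs⟩, ?_⟩
  rintro x ⟨hx, hxfin, hxsum, hxadm⟩
  obtain ⟨t, rfl⟩ := exists_eq_digitsOf hx hxfin
  rw [finsum_digitsOf_mul] at hxsum
  rw [eq_of_sum_eq hQ' hSpos hSrec (digitsOf_admissible_iff.1 hxadm) hs hxsum]

theorem stmt_16 (Q : ℕ → ℕ) (hQ0 : Q 0 = 0) (hQ : ∀ k, 1 ≤ k → Q k + 1 ≤ k)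
    (S : ℕ → ℕ) (hS0 : S 0 = 1) (hSrec : ∀ k, S (k + 1) = S k + S (Q (k + 1))) :
    StrictMono S ∧
      ∀ n : ℕ, ∃! x : ℕ → ℕ,
        (∀ k, x k ≤ 1) ∧ (Set.Finite {k : ℕ | x k = 1}) ∧
        (∑ᶠ k : ℕ, x k * S k) = n ∧
        (∀ k, x k = 1 → ∀ j, Q (k + 1) ≤ j → j < k → x j = 0) :=
  stmt_16_general Q hQ S hS0 hSrec
end

section
/- Let Q : ℕ∪{0} → ℕ∪{0} be increasing modulo intervals with associated sequence (q_n)_{n≥0} and assume additionally Q(1) = 0 and Q(k) ≤ k − 2 for all k ≥ 2. Then for every k ≥ q_3, writing n ≥ 3 for the integer with q_n ≤ k ≤ q_{n+1} − 1, one has Q(Q(Q(k)) + 1) ≤ Q(k + 1) − 2. -/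
theorem stmt_18 (Q : ℕ → ℕ) (q : ℕ → ℕ) (hq0 : q 0 = 0) (hq1 : q 1 = 1)
    (hqmono : StrictMono q)
    (hQint : ∀ n k : ℕ, q (n + 1) ≤ k → k < q (n + 2) →
      q n ≤ Q k ∧ Q k < q (n + 1))
    (hQ0 : Q 0 = 0) (hQ1 : Q 1 = 0) (hQ2 : ∀ k, 2 ≤ k → Q k + 2 ≤ k) :
    ∀ k, q 3 ≤ k → Q (Q (Q k) + 1) + 2 ≤ Q (k + 1) := by
  intro k hk
  have hk3 : 3 ≤ k := le_trans (hqmono.le_apply) hk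
  obtain ⟨m, hm3, hmk, hkm⟩ : ∃ m, 3 ≤ m ∧ q m ≤ k ∧ k < q (m + 1) := by
    refine ⟨Nat.findGreatest (fun i => q i ≤ k) k,
      Nat.le_findGreatest hk3 hk,
      Nat.findGreatest_spec (P := fun i => q i ≤ k) hk3 hk, ?_⟩
    by_contra h
    push_neg at h
    have h1 : Nat.findGreatest (fun i => q i ≤ k) k + 1 ≤ k :=
      le_trans (hqmono.le_apply) h
    have := Nat.le_findGreatest (P := fun i => q i ≤ k) h1 h
    omega
  obtain ⟨n, rfl⟩ : ∃ n, m = n + 3 := ⟨m - 3, by omega⟩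
  have hkm' : k < q (n + 4) := hkm
  have h1 : q (n + 2) ≤ Q k ∧ Q k < q (n + 3) := hQint (n + 2) k hmk hkm
  have h2 : q (n + 1) ≤ Q (Q k) ∧ Q (Q k) < q (n + 2) :=
    hQint (n + 1) (Q k) h1.1 h1.2
  have hq1le : 1 ≤ q (n + 1) := by
    calc 1 = q 1 := hq1.symm
    _ ≤ q (n + 1) := hqmono.monotone (by omega)
  have h3 := hQ2 (Q (Q k) + 1) (by omega)
  have h4 : q (n + 2) ≤ Q (k + 1) := by
    rcases lt_or_eq_of_le (Nat.succ_le_of_lt hkm') with h | h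
    · exact le_trans (le_refl _) (hQint (n + 2) (k + 1) (Nat.le_succ_of_le hmk) h).1
    · have heq : k + 1 = q (n + 4) := h
      have hlt : k + 1 < q (n + 5) := by rw [heq]; exact hqmono (by omega)
      have h5 : q (n + 3) ≤ Q (k + 1) ∧ Q (k + 1) < q (n + 4) :=
        hQint (n + 3) (k + 1) (le_of_eq heq.symm) hlt
      exact le_trans (hqmono.monotone (by omega)) h5.1
  omega
end
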